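/- arXiv:2308.15204 — 4 statements merged into one kernel-verified Lean document; each statement's English description precedes it below -/
import Mathlib

section
/- Let ℓ : [0,T] → ℝ^d be of bounded variation and let (S, t̂, ẑ, ℓ̂) with S > 0, t̂ : [0,S] → ℝ Lipschitz, ẑ : [0,S] → ℝ^d Lipschitz and ℓ̂ : [0,S] → ℝ^d of bounded variation be a normalized p-parametrized BV solution associated with ℓ, i.e. it satisfies conditions (2.1)–(2.4) and the compatibility condition (2.5). Then ℓ̂(s) = ℓ(t̂(s)) for almost every s in the set M where t̂ is strictly increasing; in particular, (S, t̂, ẑ, ℓ̂) is a relaxed solution associated with ℓ. (Lemma 3.2) -/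
/-! A BV load has few jumps: off the countable set of discontinuities of the monotone variation
function `t ↦ Var(ℓ; [0, t])`, both one-sided limits of `ℓ` equal its value, and then (2.5) forces
`ℓ̂(s) = ℓ(t̂(s))` on the whole fibre `t̂⁻¹(t)`. On `M` the map `t̂` is at most two-to-one, since a
third point of a fibre would lie strictly between two points with the same time; so the part of `M`
mapped into the jump set is countable, hence null. -/

open MeasureTheory Set Filter
open scoped RealInnerProductSpace Topology NNReal

noncomputable section

abbrev Euc (d : ℕ) := EuclideanSpace ℝ (Fin d)

variable {d : ℕ}

/-- The convex subdifferential `∂R(0)` of a positively `1`-homogeneous `R` at `0`. -/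
def subdiff0 (R : Euc d → ℝ) : Set (Euc d) := {w | ∀ v, ⟪w, v⟫ ≤ R v}

/-- Euclidean distance to `∂R(0)`. -/
def distR (R : Euc d → ℝ) (η : Euc d) : ℝ := Metric.infDist η (subdiff0 R)

/-- Standing assumptions (1.9)–(1.11) on the dissipation `R`. -/
def StdDissipation (R : Euc d → ℝ) (c C : ℝ) : Prop :=
  ConvexOn ℝ Set.univ R ∧ (∀ l : ℝ, 0 < l → ∀ z, R (l • z) = l * R z) ∧
    0 < c ∧ c ≤ C ∧ (∀ z, c * ‖z‖ ≤ R z) ∧ (∀ z, R z ≤ C * ‖z‖)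

/-- The time-independent energy `E(z) = ½⟨Az,z⟩ + F(z)`. -/
def En (A : Euc d →L[ℝ] Euc d) (F : Euc d → ℝ) (z : Euc d) : ℝ :=
  (1 / 2) * ⟪A z, z⟫ + F z

/-- `D_z Î(s,z) = Az + ∇F(z) − ℓ̂(s)`. -/
def DzI (A : Euc d →L[ℝ] Euc d) (F : Euc d → ℝ) (lhat : ℝ → Euc d) (s : ℝ) (z : Euc d) :
    Euc d := A z + gradient F z - lhat s

/-- Total variation of `f` on `[a,b]`. -/
def Var (f : ℝ → Euc d) (a b : ℝ) : ℝ := (eVariationOn f (Icc a b)).toReal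

/-- The set `M` where `t̂` is strictly increasing. -/
def Mset (S : ℝ) (that : ℝ → ℝ) : Set ℝ :=
  {s | s ∈ Ioo 0 S ∧ ∀ s₁ ∈ Icc 0 S, ∀ s₂ ∈ Icc 0 S, s₁ < s → s < s₂ → that s₁ < that s₂}

/-- Conditions (2.1)–(2.4), with `t'`, `z'` the a.e. derivatives of `t̂`, `ẑ`. -/
structure SatisfiesConds (R : Euc d → ℝ) (A : Euc d →L[ℝ] Euc d) (F : Euc d → ℝ)
    (T : ℝ) (z₀ : Euc d) (S : ℝ) (that : ℝ → ℝ) (zhat lhat : ℝ → Euc d)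
    (t' : ℝ → ℝ) (z' : ℝ → Euc d) : Prop where
  deriv_t : ∀ᵐ s ∂(volume.restrict (Ioo 0 S)), HasDerivAt that (t' s) s
  deriv_z : ∀ᵐ s ∂(volume.restrict (Ioo 0 S)), HasDerivAt zhat (z' s) s
  t_init : that 0 = 0
  t_final : that S = T
  z_init : zhat 0 = z₀
  c22 : ∀ᵐ s ∂(volume.restrict (Ioo 0 S)),
      0 ≤ t' s ∧ t' s * distR R (-(DzI A F lhat s (zhat s))) = 0
  c23 : ∀ᵐ s ∂(volume.restrict (Ioo 0 S)),
      t' s + R (z' s) + ‖z' s‖ * distR R (-(DzI A F lhat s (zhat s))) = 1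
  c24 : ∀ s₁ s₂ : ℝ, 0 ≤ s₁ → s₁ ≤ s₂ → s₂ ≤ S →
      En A F (zhat s₂) + ∫ r in s₁..s₂,
          (R (z' r) + ‖z' r‖ * distR R (-(DzI A F lhat r (zhat r)))) =
        En A F (zhat s₁) + ∫ r in s₁..s₂, ⟪lhat r, z' r⟫

/-- Relaxed, normalized, p-parametrized BV solution (Definition 3.1). -/
def IsRelaxedSolution (R : Euc d → ℝ) (A : Euc d →L[ℝ] Euc d) (F : Euc d → ℝ)
    (T : ℝ) (z₀ : Euc d) (ℓ : ℝ → Euc d)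
    (S : ℝ) (that : ℝ → ℝ) (zhat lhat : ℝ → Euc d) : Prop :=
  0 < S ∧ (∃ L : ℝ≥0, LipschitzOnWith L that (Icc 0 S)) ∧
    (∃ L : ℝ≥0, LipschitzOnWith L zhat (Icc 0 S)) ∧
    BoundedVariationOn lhat (Icc 0 S) ∧
    ∃ t' z', SatisfiesConds R A F T z₀ S that zhat lhat t' z' ∧
      ∀ᵐ s ∂(volume.restrict (Mset S that)), lhat s = ℓ (that s)


/-- One-sided limits of the BV load, with conventions at the endpoints. -/
def OneSidedLimits (T : ℝ) (ℓ lL lR : ℝ → Euc d) : Prop :=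
  (∀ t ∈ Ioc (0 : ℝ) T, Tendsto ℓ (nhdsWithin t (Iio t)) (nhds (lL t))) ∧ lL 0 = ℓ 0 ∧
    (∀ t ∈ Ico (0 : ℝ) T, Tendsto ℓ (nhdsWithin t (Ioi t)) (nhds (lR t))) ∧ lR T = ℓ T

/-- The compatibility condition (2.5). -/
def Compat25 (T S : ℝ) (that : ℝ → ℝ) (lhat ℓ lL lR : ℝ → Euc d) : Prop :=
  ∀ tstar ∈ Icc (0 : ℝ) T, ∃ sstar ∈ Icc (0 : ℝ) S, that sstar = tstar ∧
    lhat sstar ∈ ({ℓ tstar, lL tstar, lR tstar} : Set (Euc d)) ∧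
    ∀ s ∈ Icc (0 : ℝ) S, that s = tstar →
      (s < sstar → lhat s = lL tstar) ∧ (sstar < s → lhat s = lR tstar)

-- The variation function jumps by `dist (f b) l` at `b`.
theorem LocallyBoundedVariationOn.eq_of_tendsto_nhdsWithin_Iio {α E : Type*} [LinearOrder α]
    [TopologicalSpace α] [OrderTopology α] [MetricSpace E] {f : α → E} {s : Set α} {a b : α}
    {l : E} (hf : LocallyBoundedVariationOn f s) (ha : a ∈ s) (hb : b ∈ s)
    (hV : ContinuousWithinAt (variationOnFromTo f s a) s b) [(𝓝[s ∩ Iio b] b).NeBot]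
    (hl : Tendsto f (𝓝[s ∩ Iio b] b) (𝓝 l)) : l = f b := by
  have hjump := variationOnFromTo.tendsto_left ha hb hf hl
  have hcont := (hV.mono (inter_subset_left (t := Iio b))).tendsto
  have : dist (f b) l = 0 := by linarith [tendsto_nhds_unique hjump hcont]
  exact (dist_eq_zero.1 this).symm

theorem LocallyBoundedVariationOn.eq_of_tendsto_nhdsWithin_Ioi {α E : Type*} [LinearOrder α]
    [TopologicalSpace α] [OrderTopology α] [MetricSpace E] {f : α → E} {s : Set α} {a b : α}
    {l : E} (hf : LocallyBoundedVariationOn f s) (ha : a ∈ s) (hb : b ∈ s)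
    (hV : ContinuousWithinAt (variationOnFromTo f s a) s b) [(𝓝[s ∩ Ioi b] b).NeBot]
    (hl : Tendsto f (𝓝[s ∩ Ioi b] b) (𝓝 l)) : l = f b := by
  have hjump := variationOnFromTo.tendsto_right ha hb hf hl
  have hcont := (hV.mono (inter_subset_left (t := Ioi b))).tendsto
  have : dist (f b) l = 0 := by linarith [tendsto_nhds_unique hjump hcont]
  exact (dist_eq_zero.1 this).symm

theorem OneSidedLimits.countable_setOf_ne {T : ℝ} {ℓ lL lR : ℝ → Euc d}
    (hlim : OneSidedLimits T ℓ lL lR) (hℓ : BoundedVariationOn ℓ (Icc 0 T)) (hT : 0 ≤ T) :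
    {t ∈ Icc 0 T | lL t ≠ ℓ t ∨ lR t ≠ ℓ t}.Countable := by
  have h0 : (0 : ℝ) ∈ Icc 0 T := left_mem_Icc.2 hT
  have hbv := hℓ.locallyBoundedVariationOn
  refine (((countable_singleton T).insert 0).union
    (variationOnFromTo.monotoneOn hbv h0).countable_not_continuousWithinAt).mono ?_
  rintro t ⟨ht, hne⟩
  by_contra hgood
  simp only [mem_union, mem_insert_iff, mem_singleton_iff, mem_ofPred_eq, not_or, not_and,
    not_not] at hgood
  obtain ⟨⟨ht0, htT⟩, hV⟩ := hgood
  have ht' : t ∈ Ioo 0 T := ⟨ht.1.lt_of_ne' ht0, ht.2.lt_of_ne htT⟩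
  have hIcc : Icc 0 T ∈ 𝓝 t := Icc_mem_nhds ht'.1 ht'.2
  have : (𝓝[Icc 0 T ∩ Iio t] t).NeBot := by
    rw [nhdsWithin_inter_of_mem (mem_nhdsWithin_of_mem_nhds hIcc)]; infer_instance
  have : (𝓝[Icc 0 T ∩ Ioi t] t).NeBot := by
    rw [nhdsWithin_inter_of_mem (mem_nhdsWithin_of_mem_nhds hIcc)]; infer_instance
  have hL := hbv.eq_of_tendsto_nhdsWithin_Iio h0 ht (hV ht)
    ((hlim.1 t ⟨ht'.1, ht.2⟩).mono_left (nhdsWithin_mono _ inter_subset_right))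
  have hR := hbv.eq_of_tendsto_nhdsWithin_Ioi h0 ht (hV ht)
    ((hlim.2.2.1 t ⟨ht.1, ht'.2⟩).mono_left (nhdsWithin_mono _ inter_subset_right))
  exact hne.elim (· hL) (· hR)

theorem Compat25.lhat_eq_of_lL_eq_of_lR_eq {T S : ℝ} {that : ℝ → ℝ} {lhat ℓ lL lR : ℝ → Euc d}
    (hcompat : Compat25 T S that lhat ℓ lL lR) {t : ℝ} (ht : t ∈ Icc 0 T) (hL : lL t = ℓ t)
    (hR : lR t = ℓ t) {s : ℝ} (hs : s ∈ Icc 0 S) (hst : that s = t) : lhat s = ℓ t := by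
  obtain ⟨sstar, -, -, hval, hside⟩ := hcompat t ht
  rcases lt_trichotomy s sstar with hlt | rfl | hgt
  · rw [(hside s hs hst).1 hlt, hL]
  · simp only [mem_insert_iff, mem_singleton_iff] at hval
    rcases hval with h | h | h <;> simp [h, hL, hR]
  · rw [(hside s hs hst).2 hgt, hR]

theorem Mset.eq_Ioo_diff (S : ℝ) (that : ℝ → ℝ) :
    Mset S that = Ioo 0 S \ ⋃ p ∈ {p : ℝ × ℝ | p.1 ∈ Icc 0 S ∧ p.2 ∈ Icc 0 S ∧ that p.2 ≤ that p.1},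
      Ioo p.1 p.2 := by
  ext s
  simp only [Mset, Set.mem_sdiff, mem_iUnion₂, mem_ofPred_eq, Prod.exists, not_exists]
  refine and_congr_right fun _ => ⟨fun h a b ⟨ha, hb, hle⟩ ⟨has, hsb⟩ =>
    (h a ha b hb has hsb).not_ge hle, fun h a ha b hb has hsb =>
    lt_of_not_ge fun hle => h a b ⟨ha, hb, hle⟩ ⟨has, hsb⟩⟩

theorem Mset.measurableSet (S : ℝ) (that : ℝ → ℝ) : MeasurableSet (Mset S that) := by
  rw [Mset.eq_Ioo_diff]
  exact measurableSet_Ioo.diff (isOpen_biUnion fun _ _ => isOpen_Ioo).measurableSet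

theorem Mset.finite_fiber (S : ℝ) (that : ℝ → ℝ) (t : ℝ) :
    {s ∈ Mset S that | that s = t}.Finite :=
  Set.finite_of_forall_not_lt_lt fun a ha _ hb c hc hab hbc =>
    (hb.1.2 a (Ioo_subset_Icc_self ha.1.1) c (Ioo_subset_Icc_self hc.1.1) hab hbc).ne
      (ha.2.trans hc.2.symm)

theorem Mset.countable_preimage {S : ℝ} {that : ℝ → ℝ} {D : Set ℝ} (hD : D.Countable) :
    {s ∈ Mset S that | that s ∈ D}.Countable := by
  refine (hD.biUnion fun t _ => (Mset.finite_fiber S that t).countable).mono ?_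
  rintro s ⟨hs, hsD⟩
  exact mem_biUnion hsD ⟨hs, rfl⟩

theorem Mset.map_mem_Icc {S : ℝ} {that : ℝ → ℝ} (hcont : ContinuousOn that (Icc 0 S)) {s : ℝ}
    (hs : s ∈ Mset S that) : that s ∈ Icc (that 0) (that S) := by
  obtain ⟨⟨h0, hS⟩, hincr⟩ := hs
  have hcs : ContinuousWithinAt that (Icc 0 S) s := hcont s ⟨h0.le, hS.le⟩
  have hright : Ioo s S ⊆ Icc 0 S := Ioo_subset_Icc_self.trans (Icc_subset_Icc h0.le le_rfl)
  have hleft : Ioo 0 s ⊆ Icc 0 S := Ioo_subset_Icc_self.trans (Icc_subset_Icc le_rfl hS.le)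
  have := left_nhdsWithin_Ioo_neBot hS
  have := right_nhdsWithin_Ioo_neBot h0
  constructor
  · refine ge_of_tendsto (hcs.mono hright) (eventually_mem_nhdsWithin.mono fun x hx => ?_)
    exact (hincr 0 (left_mem_Icc.2 (h0.trans hS).le) x (hright hx) h0 hx.1).le
  · refine le_of_tendsto (hcs.mono hleft) (eventually_mem_nhdsWithin.mono fun x hx => ?_)
    exact (hincr x (hleft hx) S (right_mem_Icc.2 (h0.trans hS).le) hx.2 hS).le

theorem lemma_3_2_general {d : ℕ}
    (R : Euc d → ℝ) (A : Euc d →L[ℝ] Euc d) (F : Euc d → ℝ)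
    (T : ℝ) (hT : 0 < T) (z₀ : Euc d)
    (ℓ lL lR : ℝ → Euc d) (hℓBV : BoundedVariationOn ℓ (Icc 0 T))
    (hlim : OneSidedLimits T ℓ lL lR)
    (S : ℝ) (hS : 0 < S) (that : ℝ → ℝ) (zhat lhat : ℝ → Euc d)
    (t' : ℝ → ℝ) (z' : ℝ → Euc d)
    (hLipt : ∃ L : ℝ≥0, LipschitzOnWith L that (Icc 0 S))
    (hLipz : ∃ L : ℝ≥0, LipschitzOnWith L zhat (Icc 0 S))
    (hlhatBV : BoundedVariationOn lhat (Icc 0 S))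
    (hconds : SatisfiesConds R A F T z₀ S that zhat lhat t' z')
    (hcompat : Compat25 T S that lhat ℓ lL lR) :
    (∀ᵐ s ∂(volume.restrict (Mset S that)), lhat s = ℓ (that s)) ∧
      IsRelaxedSolution R A F T z₀ ℓ S that zhat lhat := by
  obtain ⟨L, hL⟩ := hLipt
  set D := {t ∈ Icc 0 T | lL t ≠ ℓ t ∨ lR t ≠ ℓ t}
  have hbad : {s ∈ Mset S that | that s ∈ D}.Countable :=
    Mset.countable_preimage (hlim.countable_setOf_ne hℓBV hT.le)
  have hgood : ∀ s ∈ Mset S that, that s ∉ D → lhat s = ℓ (that s) := by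
    intro s hs hsD
    have hrange : that s ∈ Icc 0 T := by
      simpa only [hconds.t_init, hconds.t_final] using Mset.map_mem_Icc hL.continuousOn hs
    simp only [D, mem_ofPred_eq, not_and, not_or, not_not] at hsD
    obtain ⟨hlL, hlR⟩ := hsD hrange
    exact hcompat.lhat_eq_of_lL_eq_of_lR_eq hrange hlL hlR (Ioo_subset_Icc_self hs.1) rfl
  have h31 : ∀ᵐ s ∂(volume.restrict (Mset S that)), lhat s = ℓ (that s) := by
    filter_upwards [ae_restrict_mem (Mset.measurableSet S that),
      ae_restrict_of_ae (hbad.ae_notMem volume)] with s hs hsbad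
    exact hgood s hs fun hsD => hsbad ⟨hs, hsD⟩
  exact ⟨h31, hS, ⟨L, hL⟩, hLipz, hlhatBV, t', z', hconds, h31⟩

/-- **Lemma 3.2.** Every normalized p-parametrized BV solution, i.e. a tuple
satisfying (2.1)-(2.4) together with the compatibility condition (2.5), satisfies
the relaxed compatibility (3.1) a.e. on the set where the parametrized time is
strictly increasing; in particular it is a relaxed solution. -/
theorem lemma_3_2 {d : ℕ}
    (R : Euc d → ℝ) (c C : ℝ) (hR : StdDissipation R c C)
    (A : Euc d →L[ℝ] Euc d) (hAsymm : ∀ x y : Euc d, ⟪A x, y⟫ = ⟪x, A y⟫)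
    (hApos : ∀ z : Euc d, z ≠ 0 → 0 < ⟪A z, z⟫)
    (F : Euc d → ℝ) (hF : ContDiff ℝ 2 F) (hFnonneg : ∀ z, 0 ≤ F z)
    (T : ℝ) (hT : 0 < T) (z₀ : Euc d)
    (ℓ lL lR : ℝ → Euc d) (hℓBV : BoundedVariationOn ℓ (Icc 0 T))
    (hlim : OneSidedLimits T ℓ lL lR)
    (S : ℝ) (hS : 0 < S) (that : ℝ → ℝ) (zhat lhat : ℝ → Euc d)
    (t' : ℝ → ℝ) (z' : ℝ → Euc d)
    (hLipt : ∃ L : ℝ≥0, LipschitzOnWith L that (Icc 0 S))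
    (hLipz : ∃ L : ℝ≥0, LipschitzOnWith L zhat (Icc 0 S))
    (hlhatBV : BoundedVariationOn lhat (Icc 0 S))
    (hconds : SatisfiesConds R A F T z₀ S that zhat lhat t' z')
    (hcompat : Compat25 T S that lhat ℓ lL lR) :
    (∀ᵐ s ∂(volume.restrict (Mset S that)), lhat s = ℓ (that s)) ∧
      IsRelaxedSolution R A F T z₀ ℓ S that zhat lhat :=
  lemma_3_2_general R A F T hT z₀ ℓ lL lR hℓBV hlim S hS that zhat lhat t' z' hLipt hLipz hlhatBV
    hconds hcompat

end
end

section
/- Let S > 0, let ẑ : [0,S] → ℝ^d be Lipschitz and ℓ̂ : [0,S] → ℝ^d of bounded variation, and define Î(s,z) := E(z) − ⟨ℓ̂(s), z⟩ with D_zÎ(s,z) = Az + ∇F(z) − ℓ̂(s). Then for all 0 ≤ s₁ ≤ s₂ ≤ S one has E(ẑ(s₂)) + ∫_{s₁}^{s₂} [R(ẑ'(r)) + ‖ẑ'(r)‖·dist(−D_zÎ(r, ẑ(r)), ∂R(0))] dr ≥ E(ẑ(s₁)) + ∫_{s₁}^{s₂} ⟨ℓ̂(r), ẑ'(r)⟩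 dr. (Lemma B.1) -/
/-!
Testing `η := -D_zÎ(r, ẑ r) = ℓ̂ r - ∇E(ẑ r)` against `v := ẑ' r` and any `p ∈ ∂R(0)` gives
`⟪η, v⟫ ≤ R v + ‖v‖ ‖η - p‖`, hence pointwise
`⟪ℓ̂, ẑ'⟫ ≤ R ẑ' + ‖ẑ'‖ dist(η, ∂R(0)) + ⟪∇E(ẑ), ẑ'⟫`.
The last term is the a.e. derivative of `E ∘ ẑ`, which is Lipschitz, hence absolutely continuous,
so it integrates to `E(ẑ s₂) - E(ẑ s₁)`. All integrands are bounded and measurable: `‖ẑ'‖` is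
bounded by the Lipschitz constant, and `ℓ̂` is bounded and, componentwise a difference of monotone
functions, measurable.
-/

open MeasureTheory Set Filter
open scoped RealInnerProductSpace Topology NNReal

noncomputable section

variable {d : ℕ}

theorem inner_le_add_norm_mul_infDist {E : Type*} [NormedAddCommGroup E]
    [InnerProductSpace ℝ E] {K : Set E} (hK : K.Nonempty) {v : E} {r : ℝ}
    (hKv : ∀ p ∈ K, ⟪p, v⟫ ≤ r) (w : E) :
    ⟪w, v⟫ ≤ r + ‖v‖ * Metric.infDist w K := by
  obtain ⟨p₀, hp₀⟩ := hK
  rcases eq_or_ne v 0 with rfl | hv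
  · simpa using hKv p₀ hp₀
  have hvn : 0 < ‖v‖ := norm_pos_iff.mpr hv
  suffices (⟪w, v⟫ - r) / ‖v‖ ≤ Metric.infDist w K by
    rw [div_le_iff₀ hvn] at this
    linarith
  refine (Metric.le_infDist ⟨p₀, hp₀⟩).2 fun p hp => ?_
  rw [div_le_iff₀ hvn, dist_eq_norm]
  calc ⟪w, v⟫ - r ≤ ⟪w, v⟫ - ⟪p, v⟫ := by linarith [hKv p hp]
    _ = ⟪w - p, v⟫ := (inner_sub_left _ _ _).symm
    _ ≤ ‖w - p‖ * ‖v‖ := real_inner_le_norm _ _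

theorem BoundedVariationOn.isBounded_image {α E : Type*} [LinearOrder α]
    [PseudoMetricSpace E] {f : α → E} {s : Set α} (hf : BoundedVariationOn f s) :
    Bornology.IsBounded (f '' s) :=
  Metric.isBounded_iff.2 ⟨_, by
    rintro _ ⟨x, hx, rfl⟩ _ ⟨y, hy, rfl⟩
    exact hf.dist_le hx hy⟩

theorem LocallyBoundedVariationOn.aestronglyMeasurable {E : Type*} [NormedAddCommGroup E]
    [NormedSpace ℝ E] [FiniteDimensional ℝ E] {μ : Measure ℝ} {f : ℝ → E} {s : Set ℝ}
    (hs : MeasurableSet s) (hf : LocallyBoundedVariationOn f s) :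
    AEStronglyMeasurable f (μ.restrict s) := by
  borelize E
  let e := (Module.finBasis ℝ E).equivFunL
  have hcoord : ∀ i, AEMeasurable (fun x => e (f x) i) (μ.restrict s) := fun i => by
    obtain ⟨p, q, hp, hq, hpq⟩ := (((ContinuousLinearMap.proj i).comp
      e.toContinuousLinearMap).lipschitz.comp_locallyBoundedVariationOn
        hf).exists_monotoneOn_sub_monotoneOn
    rw [show (fun x => e (f x) i) = p - q from hpq]
    exact (aemeasurable_restrict_of_monotoneOn hs hp).sub
      (aemeasurable_restrict_of_monotoneOn hs hq)
  have h := e.symm.continuous.measurable.comp_aemeasurable (aemeasurable_pi_iff.2 hcoord)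
  simpa [Function.comp_def] using h.aestronglyMeasurable

theorem ae_restrict_uIoc_eq_deriv {E : Type*} [NormedAddCommGroup E] [NormedSpace ℝ E]
    {f f' : ℝ → E} {a b : ℝ} (hab : a ≤ b)
    (hf' : ∀ᵐ x ∂volume.restrict (Ioo a b), HasDerivAt f (f' x) x) :
    f' =ᵐ[volume.restrict (uIoc a b)] deriv f := by
  rw [uIoc_of_le hab, ← restrict_Ioo_eq_restrict_Ioc]
  filter_upwards [hf'] with x hx using hx.deriv.symm

theorem LipschitzOnWith.intervalIntegrable_of_ae_hasDerivAt {f f' : ℝ → ℝ} {K : ℝ≥0}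
    {a b : ℝ} (hab : a ≤ b) (hf : LipschitzOnWith K f (Icc a b))
    (hf' : ∀ᵐ x ∂volume.restrict (Ioo a b), HasDerivAt f (f' x) x) :
    IntervalIntegrable f' volume a b := by
  rw [← uIcc_of_le hab] at hf
  exact hf.absolutelyContinuousOnInterval.intervalIntegrable_deriv.congr_ae
    (ae_restrict_uIoc_eq_deriv hab hf').symm

theorem LipschitzOnWith.integral_eq_sub_of_ae_hasDerivAt {f f' : ℝ → ℝ} {K : ℝ≥0}
    {a b : ℝ} (hab : a ≤ b) (hf : LipschitzOnWith K f (Icc a b))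
    (hf' : ∀ᵐ x ∂volume.restrict (Ioo a b), HasDerivAt f (f' x) x) :
    ∫ x in a..b, f' x = f b - f a := by
  rw [← uIcc_of_le hab] at hf
  rw [intervalIntegral.integral_congr_ae_restrict (ae_restrict_uIoc_eq_deriv hab hf'),
    hf.absolutelyContinuousOnInterval.integral_deriv_eq_sub]

theorem intervalIntegrable_of_ae_norm_le {E : Type*} [NormedAddCommGroup E] {f : ℝ → E}
    {a b M : ℝ} (hab : a ≤ b) (hf : AEStronglyMeasurable f (volume.restrict (Ioo a b)))
    (hM : ∀ᵐ x ∂volume.restrict (Ioo a b), ‖f x‖ ≤ M) : IntervalIntegrable f volume a b :=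
  (intervalIntegrable_iff_integrableOn_Ioo_of_le hab).2
    (IntegrableOn.of_bound measure_Ioo_lt_top hf M hM)

theorem BoundedVariationOn.intervalIntegrable_inner {E : Type*} [NormedAddCommGroup E]
    [InnerProductSpace ℝ E] [FiniteDimensional ℝ E] {f v : ℝ → E} {a b L : ℝ} (hab : a ≤ b)
    (hf : BoundedVariationOn f (Icc a b)) (hv : AEStronglyMeasurable v (volume.restrict (Ioo a b)))
    (hvL : ∀ᵐ r ∂volume.restrict (Ioo a b), ‖v r‖ ≤ L) :
    IntervalIntegrable (fun r => ⟪f r, v r⟫) volume a b := by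
  obtain ⟨M, hM⟩ := isBounded_iff_forall_norm_le.1 hf.isBounded_image
  refine intervalIntegrable_of_ae_norm_le (M := M * L) hab
    (((hf.mono Ioo_subset_Icc_self).locallyBoundedVariationOn.aestronglyMeasurable
      measurableSet_Ioo).inner hv) ?_
  filter_upwards [hvL, ae_restrict_mem measurableSet_Ioo] with r hvr hr
  have hfr := hM _ (mem_image_of_mem f (Ioo_subset_Icc_self hr))
  exact (norm_inner_le_norm _ _).trans
    (mul_le_mul hfr hvr (norm_nonneg _) ((norm_nonneg _).trans hfr))

theorem ContDiff.continuous_gradient {E : Type*} [NormedAddCommGroup E]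
    [InnerProductSpace ℝ E] [CompleteSpace E] {f : E → ℝ} (hf : ContDiff ℝ 1 f) :
    Continuous (gradient f) :=
  (InnerProductSpace.toDual ℝ E).symm.continuous.comp (hf.continuous_fderiv one_ne_zero)

section Energy

variable {R : Euc d → ℝ} {c C : ℝ} {A : Euc d →L[ℝ] Euc d} {F : Euc d → ℝ}

theorem StdDissipation.nonneg (hR : StdDissipation R c C) (z : Euc d) : 0 ≤ R z :=
  (mul_nonneg hR.2.2.1.le (norm_nonneg z)).trans (hR.2.2.2.2.1 z)

theorem StdDissipation.continuous (hR : StdDissipation R c C) : Continuous R :=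
  continuousOn_univ.1 (hR.1.continuousOn isOpen_univ)

theorem zero_mem_subdiff0 (hR : ∀ z, 0 ≤ R z) : (0 : Euc d) ∈ subdiff0 R := fun v => by
  simpa using hR v

theorem distR_le_norm (hR : ∀ z, 0 ≤ R z) (η : Euc d) : distR R η ≤ ‖η‖ := by
  simpa [distR] using Metric.infDist_le_dist_of_mem (x := η) (zero_mem_subdiff0 hR)

theorem inner_le_add_norm_mul_distR (hR : ∀ z, 0 ≤ R z) (w v : Euc d) :
    ⟪w, v⟫ ≤ R v + ‖v‖ * distR R w :=
  inner_le_add_norm_mul_infDist ⟨0, zero_mem_subdiff0 hR⟩ (fun _ hp => hp v) w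

theorem StdDissipation.intervalIntegrable (hR : StdDissipation R c C) {a b L N : ℝ}
    (hab : a ≤ b) {v η : ℝ → Euc d} (hv : AEStronglyMeasurable v (volume.restrict (Ioo a b)))
    (hη : AEStronglyMeasurable η (volume.restrict (Ioo a b)))
    (hvL : ∀ᵐ r ∂volume.restrict (Ioo a b), ‖v r‖ ≤ L)
    (hηN : ∀ᵐ r ∂volume.restrict (Ioo a b), ‖η r‖ ≤ N) :
    IntervalIntegrable (fun r => R (v r) + ‖v r‖ * distR R (η r)) volume a b := by
  refine intervalIntegrable_of_ae_norm_le (M := C * L + L * N) hab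
    ((hR.continuous.comp_aestronglyMeasurable hv).add
      (hv.norm.mul ((Metric.continuous_infDist_pt _).comp_aestronglyMeasurable hη))) ?_
  filter_upwards [hvL, hηN] with r hvr hηr
  have hdist : 0 ≤ distR R (η r) := Metric.infDist_nonneg
  rw [Real.norm_of_nonneg (add_nonneg (hR.nonneg _) (mul_nonneg (norm_nonneg _) hdist))]
  have hC : 0 ≤ C := hR.2.2.1.le.trans hR.2.2.2.1
  exact add_le_add ((hR.2.2.2.2.2 _).trans (mul_le_mul_of_nonneg_left hvr hC))
    (mul_le_mul hvr ((distR_le_norm hR.nonneg _).trans hηr) hdist ((norm_nonneg _).trans hvr))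

theorem contDiff_En (hF : ContDiff ℝ 1 F) : ContDiff ℝ 1 (En A F) :=
  (contDiff_const.mul (A.contDiff.inner ℝ contDiff_id)).add hF

theorem hasGradientAt_En (hA : ∀ x y, ⟪A x, y⟫ = ⟪x, A y⟫) {z : Euc d}
    (hF : DifferentiableAt ℝ F z) : HasGradientAt (En A F) (A z + gradient F z) z := by
  have hq := A.hasFDerivAt.inner ℝ (hasFDerivAt_id z)
  refine ((hq.const_mul (1 / 2 : ℝ)).add hF.hasGradientAt).congr_fderiv ?_
  ext v
  have hsymm : ⟪v, A z⟫ = ⟪z, A v⟫ := by rw [real_inner_comm, hA]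
  simp only [add_apply, smul_apply, hA,
    ContinuousLinearMap.comp_apply, ContinuousLinearMap.prod_apply, ContinuousLinearMap.id_apply,
    fderivInnerCLM_apply, id_eq, toDual_gradient, map_add, InnerProductSpace.toDual_apply_apply,
    smul_eq_mul]
  linarith

theorem neg_DzI (lhat : ℝ → Euc d) (s : ℝ) (z : Euc d) :
    -DzI A F lhat s z = lhat s - (A z + gradient F z) := by
  rw [DzI, neg_sub]

theorem inner_le_dissipation_add_inner_gradient (hR : ∀ z, 0 ≤ R z) (lhat : ℝ → Euc d)
    (s : ℝ) (z v : Euc d) :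
    ⟪lhat s, v⟫ ≤ R v + ‖v‖ * distR R (-DzI A F lhat s z) + ⟪A z + gradient F z, v⟫ := by
  have hsplit : ⟪-DzI A F lhat s z, v⟫ = ⟪lhat s, v⟫ - ⟪A z + gradient F z, v⟫ := by
    rw [neg_DzI, inner_sub_left]
  linarith [inner_le_add_norm_mul_distR hR (-DzI A F lhat s z) v]

variable {a b : ℝ} {zhat lhat : ℝ → Euc d}

theorem aestronglyMeasurable_neg_DzI (hF : ContDiff ℝ 1 F) (hz : ContinuousOn zhat (Icc a b))
    (hl : BoundedVariationOn lhat (Icc a b)) :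
    AEStronglyMeasurable (fun r => -DzI A F lhat r (zhat r)) (volume.restrict (Ioo a b)) := by
  simp_rw [neg_DzI]
  exact ((hl.mono Ioo_subset_Icc_self).locallyBoundedVariationOn.aestronglyMeasurable
    measurableSet_Ioo).sub ((((A.continuous.add hF.continuous_gradient).comp_continuousOn
      hz).mono Ioo_subset_Icc_self).aestronglyMeasurable measurableSet_Ioo)

theorem exists_norm_neg_DzI_le (hF : ContDiff ℝ 1 F) (hz : ContinuousOn zhat (Icc a b))
    (hl : BoundedVariationOn lhat (Icc a b)) :
    ∃ N, ∀ r ∈ Icc a b, ‖-DzI A F lhat r (zhat r)‖ ≤ N := by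
  obtain ⟨M, hM⟩ := isBounded_iff_forall_norm_le.1 hl.isBounded_image
  obtain ⟨N, hN⟩ := isCompact_Icc.exists_bound_of_continuousOn
    ((A.continuous.add hF.continuous_gradient).comp_continuousOn hz)
  refine ⟨M + N, fun r hr => ?_⟩
  rw [neg_DzI]
  exact (norm_sub_le _ _).trans (add_le_add (hM _ (mem_image_of_mem _ hr)) (hN r hr))

theorem hasDerivAt_En_comp (hA : ∀ x y, ⟪A x, y⟫ = ⟪x, A y⟫) {v : Euc d} {r : ℝ}
    (hF : DifferentiableAt ℝ F (zhat r)) (hz : HasDerivAt zhat v r) :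
    HasDerivAt (fun x => En A F (zhat x)) ⟪A (zhat r) + gradient F (zhat r), v⟫ r := by
  simpa only [Function.comp_def, InnerProductSpace.toDual_apply_apply] using
    (hasGradientAt_En hA hF).hasFDerivAt.comp_hasDerivAt r hz

theorem exists_lipschitzOnWith_En_comp (hF : ContDiff ℝ 1 F) {L : ℝ≥0}
    (hz : LipschitzOnWith L zhat (Icc a b)) :
    ∃ K, LipschitzOnWith K (fun x => En A F (zhat x)) (Icc a b) := by
  obtain ⟨K, hK⟩ := (contDiff_En hF).locallyLipschitz.locallyLipschitzOn
    |>.exists_lipschitzOnWith_of_compact (isCompact_Icc.image_of_continuousOn hz.continuousOn)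
  exact ⟨K * L, hK.comp hz (mapsTo_image _ _)⟩

theorem En_add_integral_inner_le (hR : StdDissipation R c C)
    (hA : ∀ x y, ⟪A x, y⟫ = ⟪x, A y⟫) (hF : ContDiff ℝ 1 F) (hab : a ≤ b) {z' : ℝ → Euc d}
    {L : ℝ≥0} (hz : LipschitzOnWith L zhat (Icc a b))
    (hz' : ∀ᵐ r ∂volume.restrict (Ioo a b), HasDerivAt zhat (z' r) r)
    (hl : BoundedVariationOn lhat (Icc a b)) :
    En A F (zhat a) + ∫ r in a..b, ⟪lhat r, z' r⟫ ≤
      En A F (zhat b) + ∫ r in a..b,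
        (R (z' r) + ‖z' r‖ * distR R (-(DzI A F lhat r (zhat r)))) := by
  set G : ℝ → Euc d := fun r => A (zhat r) + gradient F (zhat r)
  have hEz' : ∀ᵐ r ∂volume.restrict (Ioo a b),
      HasDerivAt (fun x => En A F (zhat x)) ⟪G r, z' r⟫ r := by
    filter_upwards [hz'] with r hr using
      hasDerivAt_En_comp hA (hF.differentiable one_ne_zero _) hr
  obtain ⟨K, hEz⟩ := exists_lipschitzOnWith_En_comp (A := A) hF hz
  have hz'L : ∀ᵐ r ∂volume.restrict (Ioo a b), ‖z' r‖ ≤ L := by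
    filter_upwards [hz', ae_restrict_mem measurableSet_Ioo] with r hr hmem
    exact hr.le_of_lipschitzOn (isOpen_Ioo.mem_nhds hmem) (hz.mono Ioo_subset_Icc_self)
  have hz'm : AEStronglyMeasurable z' (volume.restrict (Ioo a b)) :=
    (measurable_deriv zhat).aestronglyMeasurable.congr <| by
      filter_upwards [hz'] with r hr using hr.deriv
  obtain ⟨N, hN⟩ := exists_norm_neg_DzI_le (A := A) hF hz.continuousOn hl
  have hint_load := hl.intervalIntegrable_inner hab hz'm hz'L
  have hint_diss := hR.intervalIntegrable hab hz'm
    (aestronglyMeasurable_neg_DzI hF hz.continuousOn hl) hz'L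
    (ae_restrict_of_forall_mem measurableSet_Ioo fun r hr => hN r (Ioo_subset_Icc_self hr))
  have hint_power := hEz.intervalIntegrable_of_ae_hasDerivAt hab hEz'
  calc En A F (zhat a) + ∫ r in a..b, ⟪lhat r, z' r⟫
      ≤ En A F (zhat a) + ∫ r in a..b,
          (R (z' r) + ‖z' r‖ * distR R (-(DzI A F lhat r (zhat r))) + ⟪G r, z' r⟫) := by
        gcongr
        exact intervalIntegral.integral_mono hab hint_load (hint_diss.add hint_power)
          fun r => inner_le_dissipation_add_inner_gradient hR.nonneg lhat r (zhat r) (z' r)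
    _ = En A F (zhat b) + ∫ r in a..b,
          (R (z' r) + ‖z' r‖ * distR R (-(DzI A F lhat r (zhat r)))) := by
        rw [intervalIntegral.integral_add hint_diss hint_power,
          hEz.integral_eq_sub_of_ae_hasDerivAt hab hEz']
        ring

end Energy

theorem lemma_B_1_general {d : ℕ}
    (R : Euc d → ℝ) (c C : ℝ) (hR : StdDissipation R c C)
    (A : Euc d →L[ℝ] Euc d) (hAsymm : ∀ x y : Euc d, ⟪A x, y⟫ = ⟪x, A y⟫)
    (F : Euc d → ℝ) (hF : ContDiff ℝ 2 F)
    (S : ℝ) (zhat : ℝ → Euc d) (z' : ℝ → Euc d)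
    (hLipz : ∃ L : ℝ≥0, LipschitzOnWith L zhat (Icc 0 S))
    (hderiv : ∀ᵐ s ∂(volume.restrict (Ioo 0 S)), HasDerivAt zhat (z' s) s)
    (lhat : ℝ → Euc d) (hlhatBV : BoundedVariationOn lhat (Icc 0 S))
    (s₁ s₂ : ℝ) (h0 : 0 ≤ s₁) (h12 : s₁ ≤ s₂) (h2S : s₂ ≤ S) :
    En A F (zhat s₁) + ∫ r in s₁..s₂, ⟪lhat r, z' r⟫ ≤
      En A F (zhat s₂) + ∫ r in s₁..s₂,
        (R (z' r) + ‖z' r‖ * distR R (-(DzI A F lhat r (zhat r)))) := by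
  obtain ⟨L, hL⟩ := hLipz
  have hIcc : Icc s₁ s₂ ⊆ Icc 0 S := Icc_subset_Icc h0 h2S
  exact En_add_integral_inner_le hR hAsymm (hF.of_le one_le_two) h12 (hL.mono hIcc)
    (ae_restrict_of_ae_restrict_of_subset (Ioo_subset_Ioo h0 h2S) hderiv) (hlhatBV.mono hIcc)

/-- **Lemma B.1.** The lower energy estimate, valid for arbitrary Lipschitz `ẑ` and
BV loads `ℓ̂`. -/
theorem lemma_B_1 {d : ℕ}
    (R : Euc d → ℝ) (c C : ℝ) (hR : StdDissipation R c C)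
    (A : Euc d →L[ℝ] Euc d) (hAsymm : ∀ x y : Euc d, ⟪A x, y⟫ = ⟪x, A y⟫)
    (hApos : ∀ z : Euc d, z ≠ 0 → 0 < ⟪A z, z⟫)
    (F : Euc d → ℝ) (hF : ContDiff ℝ 2 F) (hFnonneg : ∀ z, 0 ≤ F z)
    (S : ℝ) (hS : 0 < S) (zhat : ℝ → Euc d) (z' : ℝ → Euc d)
    (hLipz : ∃ L : ℝ≥0, LipschitzOnWith L zhat (Icc 0 S))
    (hderiv : ∀ᵐ s ∂(volume.restrict (Ioo 0 S)), HasDerivAt zhat (z' s) s)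
    (lhat : ℝ → Euc d) (hlhatBV : BoundedVariationOn lhat (Icc 0 S))
    (s₁ s₂ : ℝ) (h0 : 0 ≤ s₁) (h12 : s₁ ≤ s₂) (h2S : s₂ ≤ S) :
    En A F (zhat s₁) + ∫ r in s₁..s₂, ⟪lhat r, z' r⟫ ≤
      En A F (zhat s₂) + ∫ r in s₁..s₂,
        (R (z' r) + ‖z' r‖ * distR R (-(DzI A F lhat r (zhat r)))) :=
  lemma_B_1_general R c C hR A hAsymm F hF S zhat z' hLipz hderiv lhat hlhatBV s₁ s₂ h0 h12 h2S

end
end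

section
/- Let (S, t̂, ẑ, ℓ̂) with S > 0, t̂ : [0,S] → ℝ Lipschitz, ẑ : [0,S] → ℝ^d Lipschitz, ℓ̂ : [0,S] → ℝ^d of bounded variation satisfy conditions (2.1)–(2.4) for time horizon T > 0 and initial datum z₀ ∈ ℝ^d. Then ‖ẑ'(s)‖ ≤ 1/c for a.e. s ∈ (0,S), and S ≤ T + E(z₀) + (1/c)·∫₀^S ‖ℓ̂(r)‖ dr. (A priori bounds, Step 1 of the proof of Theorem 3.4) -/
open MeasureTheory Set Filter
open scoped RealInnerProductSpace Topology NNReal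

noncomputable section

variable {d : ℕ}

/-!
Normalization (2.3) with `t̂' ≥ 0` and `R ≥ c‖·‖` forces `c‖ẑ'‖ ≤ 1`. Integrating (2.3) over
`(0,S)` and using `∫ t̂' = T` (as `t̂` is Lipschitz, hence absolutely continuous) turns `S - T`
into the total dissipation, which by the energy balance (2.4) on `[0,S]` is
`E(z₀) - E(ẑ(S)) + ∫ ⟨ℓ̂, ẑ'⟩ ≤ E(z₀) + (1/c) ∫ ‖ℓ̂‖`, since `E ≥ 0`.
-/

lemma intervalIntegral_eq_setIntegral_Ioo {E : Type*} [NormedAddCommGroup E] [NormedSpace ℝ E]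
    {a b : ℝ} (hab : a ≤ b) (f : ℝ → E) : ∫ x in a..b, f x = ∫ x in Ioo a b, f x := by
  rw [intervalIntegral.integral_of_le hab, integral_Ioc_eq_integral_Ioo]

lemma BoundedVariationOn.integrableOn_Icc_real {f : ℝ → ℝ} {a b : ℝ}
    (hf : BoundedVariationOn f (Icc a b)) : IntegrableOn f (Icc a b) := by
  obtain ⟨p, q, hp, hq, rfl⟩ := hf.locallyBoundedVariationOn.exists_monotoneOn_sub_monotoneOn
  exact (hp.integrableOn_isCompact isCompact_Icc).sub (hq.integrableOn_isCompact isCompact_Icc)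

lemma BoundedVariationOn.integrableOn_Icc {ι : Type*} [Fintype ι] {f : ℝ → EuclideanSpace ℝ ι}
    {a b : ℝ} (hf : BoundedVariationOn f (Icc a b)) : IntegrableOn f (Icc a b) :=
  Integrable.of_eval_piLp fun i =>
    ((EuclideanSpace.proj i : EuclideanSpace ℝ ι →L[ℝ] ℝ).lipschitz.comp_boundedVariationOn
      hf).integrableOn_Icc_real

lemma LipschitzOnWith.integrableOn_deriv {f : ℝ → ℝ} {a b : ℝ} {L : ℝ≥0} (hab : a ≤ b)
    (hf : LipschitzOnWith L f (Icc a b)) : IntegrableOn (deriv f) (Ioo a b) := by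
  rw [← uIcc_of_le hab] at hf
  have := hf.absolutelyContinuousOnInterval.intervalIntegrable_deriv
  exact ((intervalIntegrable_iff_integrableOn_Ioc_of_le hab).1 this).mono_set Ioo_subset_Ioc_self

lemma LipschitzOnWith.integral_deriv_eq_sub {f : ℝ → ℝ} {a b : ℝ} {L : ℝ≥0} (hab : a ≤ b)
    (hf : LipschitzOnWith L f (Icc a b)) : ∫ x in Ioo a b, deriv f x = f b - f a := by
  rw [← uIcc_of_le hab] at hf
  rw [← intervalIntegral_eq_setIntegral_Ioo hab,
    hf.absolutelyContinuousOnInterval.integral_deriv_eq_sub]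

lemma integral_mono_of_integrable_nonneg {α : Type*} [MeasurableSpace α] {μ : Measure α}
    {f g : α → ℝ} (hg : Integrable g μ) (hg0 : 0 ≤ᵐ[μ] g) (hfg : f ≤ᵐ[μ] g) :
    ∫ x, f x ∂μ ≤ ∫ x, g x ∂μ := by
  by_cases hf : Integrable f μ
  · exact integral_mono_ae hf hg hfg
  · rw [integral_undef hf]
    exact integral_nonneg_of_ae hg0

lemma en_nonneg {d : ℕ} {A : Euc d →L[ℝ] Euc d} {F : Euc d → ℝ}
    (hApos : ∀ z : Euc d, z ≠ 0 → 0 < ⟪A z, z⟫) (hFnonneg : ∀ z, 0 ≤ F z) (z : Euc d) :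
    0 ≤ En A F z := by
  have hquad : 0 ≤ ⟪A z, z⟫ := by
    rcases eq_or_ne z 0 with rfl | hz
    · simp
    · exact (hApos z hz).le
  exact add_nonneg (mul_nonneg (by norm_num) hquad) (hFnonneg z)

namespace SatisfiesConds

variable {d : ℕ} {R : Euc d → ℝ} {A : Euc d →L[ℝ] Euc d} {F : Euc d → ℝ} {T : ℝ} {z₀ : Euc d}
  {S : ℝ} {that : ℝ → ℝ} {zhat lhat : ℝ → Euc d} {t' : ℝ → ℝ} {z' : ℝ → Euc d}

lemma ae_norm_deriv_le (h : SatisfiesConds R A F T z₀ S that zhat lhat t' z') {c : ℝ}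
    (hc : 0 < c) (hlow : ∀ z, c * ‖z‖ ≤ R z) :
    ∀ᵐ s ∂(volume.restrict (Ioo 0 S)), ‖z' s‖ ≤ 1 / c := by
  filter_upwards [h.c22, h.c23] with s hsign hnorm
  have hdist : 0 ≤ ‖z' s‖ * distR R (-(DzI A F lhat s (zhat s))) :=
    mul_nonneg (norm_nonneg _) Metric.infDist_nonneg
  rw [le_div_iff₀ hc]
  linarith [hlow (z' s), hsign.1]

lemma integral_dissipation_eq (h : SatisfiesConds R A F T z₀ S that zhat lhat t' z')
    (hS : 0 ≤ S) {L : ℝ≥0} (hL : LipschitzOnWith L that (Icc 0 S)) :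
    ∫ s in Ioo 0 S, (R (z' s) + ‖z' s‖ * distR R (-(DzI A F lhat s (zhat s)))) = S - T := by
  have hdiss : ∀ᵐ s ∂(volume.restrict (Ioo 0 S)),
      R (z' s) + ‖z' s‖ * distR R (-(DzI A F lhat s (zhat s))) = 1 - deriv that s := by
    filter_upwards [h.c23, h.deriv_t] with s hnorm ht
    rw [ht.deriv]
    linarith
  rw [integral_congr_ae hdiss, integral_sub (integrable_const 1) (hL.integrableOn_deriv hS),
    hL.integral_deriv_eq_sub hS, h.t_final, h.t_init, setIntegral_const,
    Real.volume_real_Ioo_of_le hS]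
  simp

end SatisfiesConds

theorem a_priori_bounds_general {d : ℕ}
    (R : Euc d → ℝ) (c C : ℝ) (hR : StdDissipation R c C)
    (A : Euc d →L[ℝ] Euc d)
    (hApos : ∀ z : Euc d, z ≠ 0 → 0 < ⟪A z, z⟫)
    (F : Euc d → ℝ) (hFnonneg : ∀ z, 0 ≤ F z)
    (T : ℝ) (z₀ : Euc d)
    (S : ℝ) (hS : 0 < S) (that : ℝ → ℝ) (zhat lhat : ℝ → Euc d)
    (t' : ℝ → ℝ) (z' : ℝ → Euc d)
    (hLipt : ∃ L : ℝ≥0, LipschitzOnWith L that (Icc 0 S))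
    (hlhatBV : BoundedVariationOn lhat (Icc 0 S))
    (hconds : SatisfiesConds R A F T z₀ S that zhat lhat t' z') :
    (∀ᵐ s ∂(volume.restrict (Ioo 0 S)), ‖z' s‖ ≤ 1 / c) ∧
      S ≤ T + En A F z₀ + (1 / c) * ∫ s in (0:ℝ)..S, ‖lhat s‖ := by
  obtain ⟨-, -, hc, -, hlow, -⟩ := hR
  have hspeed := hconds.ae_norm_deriv_le hc hlow
  refine ⟨hspeed, ?_⟩
  obtain ⟨L, hL⟩ := hLipt
  have hbalance := hconds.c24 0 S le_rfl hS.le le_rfl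
  simp only [intervalIntegral_eq_setIntegral_Ioo hS.le] at hbalance ⊢
  rw [hconds.integral_dissipation_eq hS.le hL, hconds.z_init] at hbalance
  have hload : IntegrableOn (fun s => ‖lhat s‖) (Ioo 0 S) :=
    (hlhatBV.integrableOn_Icc.mono_set Ioo_subset_Icc_self).norm
  have hwork : ∫ s in Ioo 0 S, ⟪lhat s, z' s⟫ ≤ ∫ s in Ioo 0 S, 1 / c * ‖lhat s‖ := by
    refine integral_mono_of_integrable_nonneg (hload.const_mul _)
      (ae_of_all _ fun s => mul_nonneg (one_div_pos.2 hc).le (norm_nonneg _)) ?_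
    filter_upwards [hspeed] with s hs
    calc ⟪lhat s, z' s⟫ ≤ ‖lhat s‖ * ‖z' s‖ := real_inner_le_norm _ _
      _ ≤ ‖lhat s‖ * (1 / c) := by gcongr
      _ = 1 / c * ‖lhat s‖ := mul_comm _ _
  rw [integral_const_mul] at hwork
  linarith [en_nonneg hApos hFnonneg (zhat S)]

/-- A priori bounds (Step 1 of the proof of Theorem 3.4): `‖ẑ'‖ ≤ 1/c` a.e. and
`S ≤ T + E(z₀) + (1/c)·∫₀^S ‖ℓ̂‖`. -/
theorem a_priori_bounds {d : ℕ}
    (R : Euc d → ℝ) (c C : ℝ) (hR : StdDissipation R c C)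
    (A : Euc d →L[ℝ] Euc d) (hAsymm : ∀ x y : Euc d, ⟪A x, y⟫ = ⟪x, A y⟫)
    (hApos : ∀ z : Euc d, z ≠ 0 → 0 < ⟪A z, z⟫)
    (F : Euc d → ℝ) (hF : ContDiff ℝ 2 F) (hFnonneg : ∀ z, 0 ≤ F z)
    (T : ℝ) (hT : 0 < T) (z₀ : Euc d)
    (S : ℝ) (hS : 0 < S) (that : ℝ → ℝ) (zhat lhat : ℝ → Euc d)
    (t' : ℝ → ℝ) (z' : ℝ → Euc d)
    (hLipt : ∃ L : ℝ≥0, LipschitzOnWith L that (Icc 0 S))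
    (hLipz : ∃ L : ℝ≥0, LipschitzOnWith L zhat (Icc 0 S))
    (hlhatBV : BoundedVariationOn lhat (Icc 0 S))
    (hconds : SatisfiesConds R A F T z₀ S that zhat lhat t' z') :
    (∀ᵐ s ∂(volume.restrict (Ioo 0 S)), ‖z' s‖ ≤ 1 / c) ∧
      S ≤ T + En A F z₀ + (1 / c) * ∫ s in (0:ℝ)..S, ‖lhat s‖ :=
  a_priori_bounds_general R c C hR A hApos F hFnonneg T z₀ S hS that zhat lhat t' z' hLipt hlhatBV
    hconds

end
end

section
/- Let S > 0 and for each n ∈ ℕ let t̂_n : [0,S] → ℝ be absolutely continuous and nondecreasing, and suppose t̂_n → t̂ uniformly on [0,S]. Define M_n := {s ∈ (0,S) : t̂_n(s₁) < t̂_n(s₂) whenever 0 ≤ s₁ < s < s₂ ≤ S} and M := {s ∈ (0,S) : t̂(s₁) < t̂(s₂) whenever 0 ≤ s₁ < s < s₂ ≤ S}. Then for every s* ∈ M and every ε > 0 there exists n̄ ∈ ℕ such that for all n ≥ n̄ the set M_n ∩ (s* − ε, s* + ε) has positive Lebesgue measure. (Claim (3.8) in the proof of Theorem 3.4) -/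
open MeasureTheory Set Filter
open scoped Topology

/-!
A monotone function is locally constant at every interior point outside the set where it is
strictly increasing, so its a.e. derivative `g` vanishes a.e. there. Hence if `M_f ∩ (a, b)` were
null, `f b - f a = ∫ g` over `(a, b)` would vanish. Near `s* ∈ M` choose `a < s* < b` with
`t̂ a < t̂ b`; pointwise convergence gives `t̂_n a < t̂_n b`, hence positive measure, for
large `n`.
-/

noncomputable section

section

variable {S : ℝ} {f g : ℝ → ℝ}

theorem eventuallyEq_const_of_notMem_Mset (hmono : MonotoneOn f (Icc 0 S)) {x : ℝ}
    (hx : x ∈ Ioo 0 S) (hxM : x ∉ Mset S f) : f =ᶠ[𝓝 x] fun _ => f x := by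
  simp only [Mset, mem_ofPred_eq, hx, true_and, not_forall, not_lt] at hxM
  obtain ⟨s₁, hs₁, s₂, hs₂, hs₁x, hxs₂, hf⟩ := hxM
  have hconst : ∀ t ∈ Icc s₁ s₂, f t = f s₁ := fun t ht => by
    have ht' : t ∈ Icc 0 S := ⟨hs₁.1.trans ht.1, ht.2.trans hs₂.2⟩
    linarith [hmono hs₁ ht' ht.1, hmono ht' hs₂ ht.2]
  filter_upwards [Ioo_mem_nhds hs₁x hxs₂] with y hy
  rw [hconst y (Ioo_subset_Icc_self hy), hconst x ⟨hs₁x.le, hxs₂.le⟩]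

variable (hint : IntervalIntegrable g volume 0 S)
  (hAC : ∀ t ∈ Icc 0 S, f t = f 0 + ∫ r in (0 : ℝ)..t, g r)
include hint hAC

theorem sub_eq_intervalIntegral {u v : ℝ} (hu : u ∈ Icc 0 S) (hv : v ∈ Icc 0 S) :
    f v - f u = ∫ r in u..v, g r := by
  have hsub : ∀ w ∈ Icc 0 S, IntervalIntegrable g volume 0 w := fun w hw =>
    hint.mono_set (uIcc_subset_uIcc left_mem_uIcc (Icc_subset_uIcc hw))
  rw [hAC u hu, hAC v hv, ← intervalIntegral.integral_interval_sub_left (hsub v hv) (hsub u hu)]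
  ring

theorem ae_hasDerivAt_of_eq_integral : ∀ᵐ x, x ∈ Ioo 0 S → HasDerivAt f (g x) x := by
  filter_upwards [hint.ae_hasDerivAt_integral] with x hderiv hx
  have hxS : x ∈ uIcc 0 S := Icc_subset_uIcc (Ioo_subset_Icc_self hx)
  refine ((hderiv hxS 0 left_mem_uIcc).const_add (f 0)).congr_of_eventuallyEq ?_
  filter_upwards [Ioo_mem_nhds hx.1 hx.2] with y hy using hAC y (Ioo_subset_Icc_self hy)

theorem ae_eq_zero_of_notMem_Mset (hmono : MonotoneOn f (Icc 0 S)) :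
    ∀ᵐ x, x ∈ Ioo 0 S → x ∉ Mset S f → g x = 0 := by
  filter_upwards [ae_hasDerivAt_of_eq_integral hint hAC] with x hderiv hx hxM
  have hconst := eventuallyEq_const_of_notMem_Mset hmono hx hxM
  exact (hderiv hx).unique ((hasDerivAt_const x (f x)).congr_of_eventuallyEq hconst)

theorem volume_Mset_inter_Ioo_pos (hmono : MonotoneOn f (Icc 0 S)) {a b : ℝ}
    (ha : a ∈ Icc 0 S) (hb : b ∈ Icc 0 S) (hfab : f a < f b) :
    0 < volume (Mset S f ∩ Ioo a b) := by
  have hab : a ≤ b := le_of_not_gt fun hba => (hmono hb ha hba.le).not_gt hfab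
  refine pos_iff_ne_zero.2 fun hnull => hfab.ne ?_
  have hg : ∀ᵐ x, x ∈ Ioo a b → g x = 0 := by
    filter_upwards [ae_eq_zero_of_notMem_Mset hint hAC hmono,
      measure_eq_zero_iff_ae_notMem.1 hnull] with x hgx hxM hx
    exact hgx ⟨ha.1.trans_lt hx.1, hx.2.trans_le hb.2⟩ fun hM => hxM ⟨hM, hx⟩
  have hzero : ∫ r in a..b, g r = 0 := by
    rw [intervalIntegral.integral_of_le hab, integral_Ioc_eq_integral_Ioo]
    exact setIntegral_eq_zero_of_ae_eq_zero hg
  linarith [sub_eq_intervalIntegral hint hAC ha hb]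

end

theorem claim_3_8_general (S : ℝ)
    (thatn : ℕ → ℝ → ℝ) (gn : ℕ → ℝ → ℝ)
    (hint : ∀ n, IntervalIntegrable (gn n) volume 0 S)
    (hAC : ∀ n, ∀ t ∈ Icc (0 : ℝ) S, thatn n t = thatn n 0 + ∫ r in (0:ℝ)..t, gn n r)
    (hmono : ∀ n, MonotoneOn (thatn n) (Icc 0 S))
    (that : ℝ → ℝ)
    (hconv : TendstoUniformlyOn (fun n => thatn n) that atTop (Icc 0 S)) :
    ∀ sstar ∈ Mset S that, ∀ ε > 0, ∃ N : ℕ, ∀ n ≥ N,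
      0 < volume (Mset S (thatn n) ∩ Ioo (sstar - ε) (sstar + ε)) := by
  rintro sstar ⟨hsS, hinc⟩ ε hε
  obtain ⟨a, ha, has⟩ := exists_between (max_lt (sub_lt_self sstar hε) hsS.1)
  obtain ⟨b, hsb, hb⟩ := exists_between (lt_min (lt_add_of_pos_right sstar hε) hsS.2)
  rw [max_lt_iff] at ha
  rw [lt_min_iff] at hb
  have haS : a ∈ Icc 0 S := ⟨ha.2.le, (has.trans hsS.2).le⟩
  have hbS : b ∈ Icc 0 S := ⟨(hsS.1.trans hsb).le, hb.2.le⟩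
  have hlt : ∀ᶠ n in atTop, thatn n a < thatn n b :=
    (hconv.tendsto_at haS).eventually_lt (hconv.tendsto_at hbS) (hinc a haS b hbS has hsb)
  refine eventually_atTop.1 (hlt.mono fun n hn => ?_)
  exact (volume_Mset_inter_Ioo_pos (hint n) (hAC n) (hmono n) haS hbS hn).trans_le
    (measure_mono (inter_subset_inter_right _ (Ioo_subset_Ioo ha.1.le hb.1.le)))

/-- Claim (3.8) in the proof of Theorem 3.4: near every point of `M`, the sets `M_n`
eventually have positive measure. -/
theorem claim_3_8 (S : ℝ) (hS : 0 < S)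
    (thatn : ℕ → ℝ → ℝ) (gn : ℕ → ℝ → ℝ)
    (hint : ∀ n, IntervalIntegrable (gn n) volume 0 S)
    (hAC : ∀ n, ∀ t ∈ Icc (0 : ℝ) S, thatn n t = thatn n 0 + ∫ r in (0:ℝ)..t, gn n r)
    (hmono : ∀ n, MonotoneOn (thatn n) (Icc 0 S))
    (that : ℝ → ℝ)
    (hconv : TendstoUniformlyOn (fun n => thatn n) that atTop (Icc 0 S)) :
    ∀ sstar ∈ Mset S that, ∀ ε > 0, ∃ N : ℕ, ∀ n ≥ N,
      0 < volume (Mset S (thatn n) ∩ Ioo (sstar - ε) (sstar + ε)) :=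
  claim_3_8_general S thatn gn hint hAC hmono that hconv

end
end
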